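/- Mandelstam–Tamm-type inequality: for a self-adjoint bounded operator H on a Hilbert space and unit vector ψ, if φ(t) = exp(−itH)ψ, then |d/dt |⟨ψ, φ(t)⟩|| ≤ ΔH, where ΔH² = ‖Hψ‖² − ⟨ψ, Hψ⟩². -/

import Mathlib

open NormedSpace Complex ContinuousLinearMap in
/-- Mandelstam–Tamm-type inequality: for bounded self-adjoint `H`
and a unit vector `ψ`, with `φ(t) = e^{-itH}ψ`, the survival amplitude modulus
`t ↦ |⟨ψ, φ(t)⟩|` is Lipschitz with constant `ΔH = √(‖Hψ‖² − ⟨ψ,Hψ⟩²)`. -/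
theorem mandelstam_tamm_lipschitz {ℋ : Type*} [NormedAddCommGroup ℋ]
    [InnerProductSpace ℂ ℋ] [CompleteSpace ℋ]
    (H : ℋ →L[ℂ] ℋ) (hH : IsSelfAdjoint H) (ψ : ℋ) (hψ : ‖ψ‖ = 1) :
    LipschitzWith
      (Real.toNNReal (Real.sqrt (‖H ψ‖ ^ 2 - ((inner ℂ ψ (H ψ) : ℂ).re) ^ 2)))
      (fun t : ℝ =>
        ‖(inner ℂ ψ ((NormedSpace.exp ((-(Complex.I * (t : ℂ))) • H)) ψ) : ℂ)‖) := by
  letI : NormedAlgebra ℚ (ℋ →L[ℂ] ℋ) := NormedAlgebra.restrictScalars ℚ ℂ (ℋ →L[ℂ] ℋ)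
  set E : ℝ := ((inner ℂ ψ (H ψ) : ℂ)).re with hE
  set A : ℋ →L[ℂ] ℋ := H - (E : ℂ) • 1 with hAdef
  -- A is self-adjoint
  have hA : IsSelfAdjoint A := by
    refine hH.sub ?_
    rw [IsSelfAdjoint, star_smul, star_one]
    norm_num [Complex.star_def, Complex.conj_ofReal]
  -- norm of A ψ
  have hre : ((inner ℂ (H ψ) ψ : ℂ)).re = E := by
    have h : (starRingEnd ℂ) (inner ℂ ψ (H ψ) : ℂ) = (inner ℂ (H ψ) ψ : ℂ) :=
      inner_conj_symm (𝕜 := ℂ) (H ψ) ψ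
    rw [hE, ← h, Complex.conj_re]
  have hnormA : ‖A ψ‖ ^ 2 = ‖H ψ‖ ^ 2 - E ^ 2 := by
    have hAψ : A ψ = H ψ - (E : ℂ) • ψ := by simp [hAdef]
    have hre2 : RCLike.re ((inner ℂ (H ψ) ((E : ℂ) • ψ) : ℂ)) = E * E := by
      rw [inner_smul_right]
      simp only [RCLike.re_to_complex, Complex.mul_re, Complex.ofReal_re, Complex.ofReal_im,
        hre]
      ring
    rw [hAψ, @norm_sub_sq ℂ, hre2, norm_smul, hψ]
    simp only [Complex.norm_real, Real.norm_eq_abs, mul_one, mul_pow, _root_.sq_abs]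
    ring
  have hconst : Real.sqrt (‖H ψ‖ ^ 2 - E ^ 2) = ‖A ψ‖ := by
    rw [← hnormA, Real.sqrt_sq (norm_nonneg _)]
  -- skew-adjointness of -(I t) • A, hence the exponential is unitary
  have hskew : ∀ t : ℝ, (-(I * (t : ℂ))) • A ∈ skewAdjoint (ℋ →L[ℂ] ℋ) := by
    intro t
    rw [skewAdjoint.mem_iff, star_smul, hA.star_eq, ← neg_smul]
    congr 1
    simp [Complex.star_def]
  have hunit : ∀ t : ℝ, ∀ x : ℋ, ‖NormedSpace.exp ((-(I * (t : ℂ))) • A) x‖ = ‖x‖ := by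
    intro t x
    have hu := exp_mem_unitary_of_mem_skewAdjoint (hskew t)
    set U := NormedSpace.exp ((-(I * (t : ℂ))) • A) with hU
    have h1 : star U * U = 1 := (Unitary.mem_iff.mp hu).1
    have h2 : (inner ℂ (U x) (U x) : ℂ) = inner ℂ x x := by
      rw [← ContinuousLinearMap.adjoint_inner_right U x (U x)]
      rw [← ContinuousLinearMap.star_eq_adjoint]
      have : star U (U x) = (star U * U) x := rfl
      rw [this, h1]
      simp
    have h3 : ‖U x‖ ^ 2 = ‖x‖ ^ 2 := by
      rw [@inner_self_eq_norm_sq_to_K ℂ, @inner_self_eq_norm_sq_to_K ℂ] at h2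
      exact_mod_cast h2
    calc ‖U x‖ = Real.sqrt (‖U x‖ ^ 2) := (Real.sqrt_sq (norm_nonneg _)).symm
      _ = Real.sqrt (‖x‖ ^ 2) := by rw [h3]
      _ = ‖x‖ := Real.sqrt_sq (norm_nonneg _)
  -- the reduced amplitude
  set g : ℝ → ℂ := fun t => inner ℂ ψ (NormedSpace.exp ((-(I * (t : ℂ))) • A) ψ) with hg
  -- derivative of g
  have hderiv : ∀ t : ℝ, HasDerivAt g
      ((inner ℂ ψ ((-I) • (NormedSpace.exp ((-(I * (t : ℂ))) • A) (A ψ)))) +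
        (inner ℂ (0 : ℋ) (NormedSpace.exp ((-(I * (t : ℂ))) • A) ψ))) t := by
    intro t
    have h1 : HasDerivAt (fun u : ℂ => NormedSpace.exp (u • A))
        (NormedSpace.exp ((-(I * (t : ℂ))) • A) * A) (-(I * (t : ℂ))) :=
      hasDerivAt_exp_smul_const A (-(I * (t : ℂ)))
    have h2 : HasDerivAt (fun s : ℝ => -(I * (s : ℂ))) (-I) t := by
      have hc : HasDerivAt (fun s : ℝ => ((s : ℂ))) 1 t := by
        exact Complex.ofRealCLM.hasDerivAt (x := t)
      have := (hc.const_mul I).neg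
      simpa [Pi.neg_def] using this
    have h3 : HasDerivAt (fun s : ℝ => NormedSpace.exp ((-(I * (s : ℂ))) • A))
        ((-I) • (NormedSpace.exp ((-(I * (t : ℂ))) • A) * A)) t :=
      HasDerivAt.scomp (g₁ := fun u : ℂ => NormedSpace.exp (u • A)) t h1 h2
    have h4 : HasDerivAt (fun s : ℝ => NormedSpace.exp ((-(I * (s : ℂ))) • A) ψ)
        ((-I) • (NormedSpace.exp ((-(I * (t : ℂ))) • A) (A ψ))) t := by
      set L : (ℋ →L[ℂ] ℋ) →L[ℝ] ℋ :=
        ((ContinuousLinearMap.apply ℂ ℋ ψ)).restrictScalars ℝ with hL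
      have h5 := L.hasFDerivAt.comp_hasDerivAt t h3
      have hLe : ∀ B : ℋ →L[ℂ] ℋ, L B = B ψ := fun B => rfl
      simpa [hLe, ContinuousLinearMap.mul_apply, smul_smul, Function.comp_def] using h5
    exact HasDerivAt.inner ℂ (hasDerivAt_const t ψ) h4
  -- Lipschitz bound for g
  have hgLip : LipschitzWith ‖A ψ‖₊ g := by
    refine lipschitzOnWith_univ.mp
      (Convex.lipschitzOnWith_of_nnnorm_hasDerivWithin_le (convex_univ)
      (C := ‖A ψ‖₊)
      (f' := fun t : ℝ => (inner ℂ ψ ((-I) • (NormedSpace.exp ((-(I * (t : ℂ))) • A) (A ψ)))) +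
        (inner ℂ (0 : ℋ) (NormedSpace.exp ((-(I * (t : ℂ))) • A) ψ)))
      (fun t _ => (hderiv t).hasDerivWithinAt) (fun t _ => ?_))
    · rw [← NNReal.coe_le_coe]
      push_cast
      simp only [inner_zero_left, add_zero, coe_nnnorm]
      calc ‖(inner ℂ ψ ((-I) • (NormedSpace.exp ((-(I * (t : ℂ))) • A) (A ψ))) : ℂ)‖
          ≤ ‖ψ‖ * ‖(-I) • (NormedSpace.exp ((-(I * (t : ℂ))) • A) (A ψ))‖ :=
            norm_inner_le_norm _ _
        _ = ‖A ψ‖ := by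
            rw [hψ, one_mul, norm_smul, hunit t (A ψ)]
            simp
  -- relate the original amplitude to g
  have hkey : ∀ t : ℝ,
      ‖(inner ℂ ψ ((NormedSpace.exp ((-(I * (t : ℂ))) • H)) ψ) : ℂ)‖ = ‖g t‖ := by
    intro t
    set c : ℂ := -(I * (t : ℂ)) with hc
    have hsplit : c • H = (algebraMap ℂ (ℋ →L[ℂ] ℋ)) (c * E) + c • A := by
      rw [hAdef]
      rw [Algebra.algebraMap_eq_smul_one, smul_sub, mul_smul]
      rw [smul_comm c (E : ℂ)]
      abel
    have hcomm : Commute ((algebraMap ℂ (ℋ →L[ℂ] ℋ)) (c * E)) (c • A) :=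
      Algebra.commutes _ _
    have hexp : NormedSpace.exp (c • H)
        = (algebraMap ℂ (ℋ →L[ℂ] ℋ)) (Complex.exp (c * E)) * NormedSpace.exp (c • A) := by
      rw [hsplit, NormedSpace.exp_add_of_commute hcomm, ← NormedSpace.algebraMap_exp_comm,
        Complex.exp_eq_exp_ℂ]
    rw [hexp]
    have happ : ((algebraMap ℂ (ℋ →L[ℂ] ℋ)) (Complex.exp (c * E)) *
        NormedSpace.exp (c • A)) ψ
        = Complex.exp (c * E) • (NormedSpace.exp (c • A) ψ) := by
      rw [ContinuousLinearMap.mul_apply, Algebra.algebraMap_eq_smul_one]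
      simp
    rw [happ, inner_smul_right, norm_mul]
    have habs : ‖Complex.exp (c * E)‖ = 1 := by
      rw [Complex.norm_exp]
      have : (c * E).re = 0 := by
        rw [hc]
        simp [Complex.mul_re]
      rw [this, Real.exp_zero]
    rw [habs, one_mul]
  -- conclude
  have : Real.toNNReal (Real.sqrt (‖H ψ‖ ^ 2 - E ^ 2)) = ‖A ψ‖₊ := by
    rw [hconst, ← coe_nnnorm, Real.toNNReal_coe]
  rw [this]
  have := (lipschitzWith_one_norm (E := ℂ)).comp hgLip
  rw [one_mul] at this
  convert this using 1
  funext t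
  exact hkey t
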